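/- arXiv:math/0311402 — 9 statements merged into one kernel-verified Lean document; each statement's English description precedes it below -/
import Mathlib

section
/- Let H be a unital C*-algebra, X a finite set, and v ∈ M_X(H) a matrix. Define the linear map Φ : (X → ℂ) → (X → H) by Φ(f) j = Σ_i f i • v j i, where X → H is the unital *-algebra with pointwise operations. Then Φ is a unital *-algebra homomorphism if and only if: every entry of v is self-adjoint, every entry of v is idempotent, v j i * v j k = 0 whenever i ≠ k (entries in a common row are orthogonal), and Σ_i v j i = 1 for every j (each row sums to 1). -/
/-- For a unital C*-algebra `H`, a finite set `X` and a matrix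
`v ∈ M_X(H)`, the linear map `Φ : (X → ℂ) → (X → H)`, `Φ f j = ∑ i, f i • v j i`,
is a unital *-algebra homomorphism iff all entries of `v` are self-adjoint
idempotents, entries in a common row are pairwise orthogonal, and each row of
`v` sums to `1`. -/
theorem map_is_star_alg_hom_iff_magic_rows
    (H : Type*) [CStarAlgebra H] (X : Type*) [Fintype X]
    (v : Matrix X X H) :
    ((∀ f g : X → ℂ, (fun j => ∑ i, (f * g) i • v j i) =
        (fun j => ∑ i, f i • v j i) * (fun j => ∑ i, g i • v j i)) ∧
      (fun j => ∑ i, (1 : X → ℂ) i • v j i) = (1 : X → H) ∧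
      (∀ f : X → ℂ, (fun j => ∑ i, (star f) i • v j i) =
        star (fun j => ∑ i, f i • v j i))) ↔
    ((∀ j i, star (v j i) = v j i) ∧
      (∀ j i, v j i * v j i = v j i) ∧
      (∀ j i k, i ≠ k → v j i * v j k = 0) ∧
      (∀ j, ∑ i, v j i = 1)) := by
  classical
  constructor
  · rintro ⟨hmul, hone, hstar⟩
    refine ⟨?_, ?_, ?_, ?_⟩
    · intro j i
      have := congrFun (hstar (fun x => if x = i then (1:ℂ) else 0)) j
      simp only [Pi.star_apply, star_sum, star_smul, apply_ite (star : ℂ → ℂ),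
        star_one, star_zero] at this
      simp only [ite_smul, one_smul, zero_smul, Finset.sum_ite_eq',
        Finset.mem_univ, if_true] at this
      exact this.symm
    · intro j i
      have := congrFun (hmul (fun x => if x = i then (1:ℂ) else 0)
        (fun x => if x = i then (1:ℂ) else 0)) j
      simp only [Pi.mul_apply, mul_ite, ite_mul, one_mul, mul_one, mul_zero, zero_mul,
        if_pos, ite_smul, one_smul, zero_smul, Finset.sum_ite_eq',
        Finset.mem_univ, if_true] at this
      simpa using this.symm
    · intro j i k hik
      have := congrFun (hmul (fun x => if x = i then (1:ℂ) else 0)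
        (fun x => if x = k then (1:ℂ) else 0)) j
      simp only [Pi.mul_apply, mul_ite, ite_mul, one_mul, mul_one, mul_zero, zero_mul,
        ite_smul, one_smul, zero_smul, Finset.sum_ite_eq',
        Finset.mem_univ, if_true] at this
      simpa [Ne.symm hik] using this.symm
    · intro j
      have := congrFun hone j
      simpa using this
  · rintro ⟨hsa, hid, horth, hrow⟩
    refine ⟨?_, ?_, ?_⟩
    · intro f g
      funext j
      rw [Pi.mul_apply, Finset.sum_mul_sum]
      refine Finset.sum_congr rfl (fun i _ => ?_)
      rw [Finset.sum_eq_single i]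
      · rw [smul_mul_smul_comm, hid j i, Pi.mul_apply, mul_smul]
      · intro k _ hk
        rw [smul_mul_smul_comm, horth j i k (Ne.symm hk), smul_zero]
      · intro h; exact absurd (Finset.mem_univ i) h
    · funext j
      simp [hrow j]
    · intro f
      funext j
      simp only [Pi.star_apply, star_sum, star_smul, hsa]
end

section
/- Let H be a unital C*-algebra, X a finite set, v ∈ M_X(H) a magic biunitary, and d ∈ M_X(ℂ) a complex matrix that commutes with v. Then for every natural number k ≥ 1 the entrywise (Hadamard) k-th power d^{∘k}, defined by (d^{∘k}) i j = (d i j)^k, also commutes with v. -/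
section MagicAux
variable {H : Type*} [CStarAlgebra H] {X : Type*} [Fintype X] [DecidableEq X]

/-- Two projections `p, q` with `q ≤ 1 - p` (in the spectral order) are orthogonal. -/
lemma magic_proj_orth' (p q : H)
    (hp : star p = p) (hpp : p * p = p) (hq : star q = q) (hqq : q * q = q)
    (hle : letI := CStarAlgebra.spectralOrder H; q ≤ 1 - p) : p * q = 0 := by
  letI := CStarAlgebra.spectralOrder H
  haveI := CStarAlgebra.spectralOrderedRing H
  have h1 : p * q * p ≤ p * (1 - p) * p := by
    have := star_left_conjugate_le_conjugate hle p
    rwa [hp] at this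
  have h2 : p * (1 - p) * p = 0 := by
    rw [mul_sub, mul_one, hpp, sub_mul, hpp, sub_self]
  have h3 : (0 : H) ≤ p * q * p := by
    have := star_mul_self_nonneg (q * p)
    rwa [star_mul, hq, hp, ← mul_assoc, mul_assoc p q, hqq] at this
  have h4 : p * q * p = 0 := le_antisymm (h2 ▸ h1) h3
  have h5 : star (q * p) * (q * p) = 0 := by
    rw [star_mul, hq, hp, ← mul_assoc, mul_assoc p q, hqq]; exact h4
  have h6 : q * p = 0 := by
    have hn := CStarRing.norm_star_mul_self (x := q * p)
    rw [h5, norm_zero] at hn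
    have : ‖q * p‖ = 0 := by nlinarith [norm_nonneg (q * p)]
    exact norm_eq_zero.mp this
  calc p * q = star (q * p) := by rw [star_mul, hq, hp]
  _ = 0 := by rw [h6, star_zero]

/-- Projections summing to `1` are pairwise orthogonal. -/
lemma magic_sum_proj_orth (f : X → H) (hsa : ∀ x, star (f x) = f x)
    (hid : ∀ x, f x * f x = f x) (hsum : ∑ x, f x = 1)
    {b j : X} (hbj : b ≠ j) : f b * f j = 0 := by
  letI := CStarAlgebra.spectralOrder H
  haveI := CStarAlgebra.spectralOrderedRing H
  refine magic_proj_orth' (f b) (f j) (hsa b) (hid b) (hsa j) (hid j) ?_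
  have key : 1 - f b - f j = ∑ x ∈ (Finset.univ \ {b, j}), f x := by
    rw [← hsum, ← Finset.sum_sdiff (Finset.subset_univ {b, j}),
      Finset.sum_pair hbj]
    abel
  have hpos : (0:H) ≤ 1 - f b - f j := by
    rw [key]
    refine Finset.sum_nonneg fun x _ => ?_
    calc (0:H) ≤ star (f x) * f x := star_mul_self_nonneg (f x)
    _ = f x := by rw [hsa, hid]
  exact sub_nonneg.mp hpos

end MagicAux

/-- If `v ∈ M_X(H)` is a magic biunitary over a unital C*-algebra
and `d ∈ M_X(ℂ)` commutes with `v`, then each entrywise (Hadamard) power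
`d^{∘k}` with `k ≥ 1` commutes with `v`. -/
theorem hadamard_power_commutes
    (H : Type*) [CStarAlgebra H] (X : Type*) [Fintype X] [DecidableEq X]
    (v : Matrix X X H)
    (hsa : ∀ i j, star (v i j) = v i j)
    (hidem : ∀ i j, v i j * v i j = v i j)
    (hrow : ∀ i, ∑ j, v i j = 1)
    (hcol : ∀ j, ∑ i, v i j = 1)
    (d : Matrix X X ℂ)
    (hd : d.map (algebraMap ℂ H) * v = v * d.map (algebraMap ℂ H)) :
    ∀ k : ℕ, 1 ≤ k →
      (Matrix.of fun i j => (d i j) ^ k).map (algebraMap ℂ H) * v =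
        v * (Matrix.of fun i j => (d i j) ^ k).map (algebraMap ℂ H) := by
  -- orthogonality in rows and columns
  have rowo : ∀ a {b x : X}, b ≠ x → v a b * v a x = 0 := fun a _ _ h =>
    magic_sum_proj_orth (v a) (hsa a) (hidem a) (hrow a) h
  have colo : ∀ l {b x : X}, b ≠ x → v b l * v x l = 0 := fun l _ _ h =>
    magic_sum_proj_orth (fun i => v i l) (fun i => hsa i l) (fun i => hidem i l) (hcol l) h
  -- the key sandwiched identity
  have key : ∀ a b c l : X, (d a c) • (v a b * v c l) = (d b l) • (v a b * v c l) := by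
    intro a b c l
    have hentry : ∑ x, d a x • v x l = ∑ x, d x l • v a x := by
      have := congrFun (congrFun hd a) l
      simpa [Matrix.mul_apply, Matrix.map_apply, Algebra.smul_def, Algebra.commutes] using this
    have h := congrArg (fun z => v a b * z * v c l) hentry
    simp only [Finset.mul_sum, Finset.sum_mul, mul_smul_comm, smul_mul_assoc] at h
    have hL : ∑ x, d a x • (v a b * v x l * v c l) = d a c • (v a b * v c l) := by
      rw [Finset.sum_eq_single c]
      · rw [mul_assoc, hidem]
      · intro x _ hx
        rw [mul_assoc, colo l hx, mul_zero, smul_zero]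
      · simp
    have hR : ∑ x, d x l • (v a b * v a x * v c l) = d b l • (v a b * v c l) := by
      rw [Finset.sum_eq_single b]
      · rw [hidem]
      · intro x _ hx
        rw [rowo a (Ne.symm hx), zero_mul, smul_zero]
      · simp
    rw [hL, hR] at h
    exact h
  -- key identity for powers
  have keypow : ∀ (k : ℕ) (a b c l : X),
      (d a c) ^ k • (v a b * v c l) = (d b l) ^ k • (v a b * v c l) := by
    intro k a b c l
    induction k with
    | zero => simp
    | succ n ih =>
      rw [pow_succ, mul_smul, key, ← mul_smul, mul_comm, mul_smul, ih, ← mul_smul,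
        mul_comm, ← pow_succ]
  intro k _
  ext i l
  simp only [Matrix.mul_apply, Matrix.map_apply, Matrix.of_apply]
  have lhs_eq : ∀ x : X, algebraMap ℂ H (d i x ^ k) * v x l = (d i x ^ k) • v x l := fun x =>
    (Algebra.smul_def _ _).symm
  have rhs_eq : ∀ x : X, v i x * algebraMap ℂ H (d x l ^ k) = (d x l ^ k) • v i x := fun x => by
    rw [← Algebra.commutes, ← Algebra.smul_def]
  simp only [lhs_eq, rhs_eq]
  calc ∑ x, (d i x ^ k) • v x l
      = ∑ x, (d i x ^ k) • ((∑ b, v i b) * v x l) := by rw [hrow]; simp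
    _ = ∑ x, ∑ b, (d i x ^ k) • (v i b * v x l) := by
        simp [Finset.sum_mul, Finset.smul_sum]
    _ = ∑ x, ∑ b, (d b l ^ k) • (v i b * v x l) := by
        refine Finset.sum_congr rfl fun x _ => Finset.sum_congr rfl fun b _ => keypow k i b x l
    _ = ∑ b, (d b l ^ k) • (v i b * ∑ x, v x l) := by
        rw [Finset.sum_comm]
        simp [Finset.mul_sum, Finset.smul_sum]
    _ = ∑ b, (d b l ^ k) • v i b := by rw [hcol]; simp
end

section
/- Let H be a unital C*-algebra, X a finite set, v ∈ M_X(H) a magic biunitary, and d ∈ M_X(ℂ) a complex matrix that commutes with v. For every complex number c define the 0–1 matrix d_c ∈ M_X(ℂ) by (d_c) i j = 1 if d i j = c and (d_c) i j = 0 otherwise. Then d_c commutes with v for every c ∈ ℂ. -/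
open scoped Classical

/-- In a C*-algebra, a family of self-adjoint idempotents summing to `1` is
mutually orthogonal. -/
lemma magic_row_orth {H : Type*} [CStarAlgebra H] {X : Type*} [Fintype X] [DecidableEq X]
    (w : X → H) (hsa : ∀ m, star (w m) = w m) (hid : ∀ m, w m * w m = w m)
    (hsum : ∑ m, w m = 1) {j k : X} (hjk : j ≠ k) : w j * w k = 0 := by
  letI := CStarAlgebra.spectralOrder H
  haveI := CStarAlgebra.spectralOrderedRing H
  have hsub : ∑ m ∈ Finset.univ.erase j, w m = 1 - w j := by
    rw [eq_sub_iff_add_eq, Finset.sum_erase_add _ _ (Finset.mem_univ j), hsum]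
  have h1 : ∑ m ∈ Finset.univ.erase j, w j * w m * w j = 0 := by
    rw [← Finset.sum_mul, ← Finset.mul_sum, hsub, mul_sub, mul_one, hid, sub_self, zero_mul]
  have h2 : w j * w k * w j = 0 := by
    refine (Finset.sum_eq_zero_iff_of_nonneg ?_).mp h1 k
      (Finset.mem_erase.mpr ⟨hjk.symm, Finset.mem_univ k⟩)
    intro m _
    have hrw : star (w m * w j) * (w m * w j) = w j * w m * w j := by
      rw [star_mul, hsa, hsa, mul_assoc, ← mul_assoc (w m), hid, ← mul_assoc]
    rw [← hrw]
    exact star_mul_self_nonneg _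
  have h3 : w k * w j = 0 := by
    rw [← CStarRing.star_mul_self_eq_zero_iff]
    rw [star_mul, hsa, hsa, mul_assoc, ← mul_assoc (w k), hid, ← mul_assoc]
    exact h2
  calc w j * w k = star (w k * w j) := by rw [star_mul, hsa, hsa]
    _ = 0 := by rw [h3, star_zero]

/-- If `v ∈ M_X(H)` is a magic biunitary over a unital C*-algebra
and `d ∈ M_X(ℂ)` commutes with `v`, then for every `c ∈ ℂ` the 0–1 matrix
`d_c` (with `(d_c) i j = 1` iff `d i j = c`) commutes with `v`. -/
theorem level_set_matrix_commutes
    (H : Type*) [CStarAlgebra H] (X : Type*) [Fintype X] [DecidableEq X]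
    (v : Matrix X X H)
    (hsa : ∀ i j, star (v i j) = v i j)
    (hidem : ∀ i j, v i j * v i j = v i j)
    (hrow : ∀ i, ∑ j, v i j = 1)
    (hcol : ∀ j, ∑ i, v i j = 1)
    (d : Matrix X X ℂ)
    (hd : d.map (algebraMap ℂ H) * v = v * d.map (algebraMap ℂ H)) :
    ∀ c : ℂ,
      (Matrix.of fun i j => if d i j = c then (1 : ℂ) else 0).map (algebraMap ℂ H) * v =
        v * (Matrix.of fun i j => if d i j = c then (1 : ℂ) else 0).map (algebraMap ℂ H) := by
  intro c
  have swap : ∀ (r : ℂ) (x y : H),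
      x * (algebraMap ℂ H r * y) = algebraMap ℂ H r * (x * y) := by
    intro r x y
    rw [← mul_assoc, ← Algebra.commutes r x, mul_assoc]
  -- row and column orthogonality
  have hR : ∀ i {j k}, j ≠ k → v i j * v i k = 0 := fun i {j k} h =>
    magic_row_orth (fun m => v i m) (fun m => hsa i m) (fun m => hidem i m) (hrow i) h
  have hC : ∀ j {i k}, i ≠ k → v i j * v k j = 0 := fun j {i k} h =>
    magic_row_orth (fun m => v m j) (fun m => hsa m j) (fun m => hidem m j) (hcol j) h
  -- entrywise commutation
  have hd' : ∀ i j, ∑ m, algebraMap ℂ H (d i m) * v m j = ∑ m, v i m * algebraMap ℂ H (d m j) := by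
    intro i j
    have h := congrFun (congrFun hd i) j
    simpa [Matrix.mul_apply, Matrix.map_apply] using h
  -- key identity
  have key : ∀ i j k l,
      algebraMap ℂ H (d i l) * (v i k * v l j) = algebraMap ℂ H (d k j) * (v i k * v l j) := by
    intro i j k l
    have h := congrArg (fun x => v i k * x * v l j) (hd' i j)
    have L : v i k * (∑ m, algebraMap ℂ H (d i m) * v m j) * v l j
        = algebraMap ℂ H (d i l) * (v i k * v l j) := by
      rw [Finset.mul_sum, Finset.sum_mul, Finset.sum_eq_single l]
      · rw [swap, mul_assoc, mul_assoc, hidem]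
      · intro b _ hb
        rw [swap, mul_assoc, mul_assoc, hC j hb, mul_zero, mul_zero]
      · intro hl; exact absurd (Finset.mem_univ l) hl
    have R : v i k * (∑ m, v i m * algebraMap ℂ H (d m j)) * v l j
        = algebraMap ℂ H (d k j) * (v i k * v l j) := by
      rw [Finset.mul_sum, Finset.sum_mul, Finset.sum_eq_single k]
      · rw [← mul_assoc (v i k) (v i k), hidem, ← Algebra.commutes (d k j) (v i k), mul_assoc]
      · intro b _ hb
        rw [← mul_assoc (v i k) (v i b), hR i (Ne.symm hb), zero_mul, zero_mul]
      · intro hk; exact absurd (Finset.mem_univ k) hk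
    rw [L, R] at h
    exact h
  -- vanishing lemma
  have vanish : ∀ i j k l, d i l ≠ d k j → v i k * v l j = 0 := by
    intro i j k l hne
    have h0 : algebraMap ℂ H (d i l - d k j) * (v i k * v l j) = 0 := by
      rw [map_sub, sub_mul, key, sub_self]
    have h1 : algebraMap ℂ H (d i l - d k j)⁻¹ * (algebraMap ℂ H (d i l - d k j) * (v i k * v l j))
        = v i k * v l j := by
      rw [← mul_assoc, ← map_mul, inv_mul_cancel₀ (sub_ne_zero.mpr hne), map_one, one_mul]
    rw [h0, mul_zero] at h1
    exact h1.symm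
  -- final computation
  ext i j
  simp only [Matrix.mul_apply, Matrix.map_apply, Matrix.of_apply]
  calc ∑ m, algebraMap ℂ H (if d i m = c then (1:ℂ) else 0) * v m j
      = ∑ m, ∑ k, algebraMap ℂ H (if d i m = c then (1:ℂ) else 0) * (v i k * v m j) := by
        refine Finset.sum_congr rfl fun m _ => ?_
        rw [← Finset.mul_sum, ← Finset.sum_mul, hrow i, one_mul]
    _ = ∑ m, ∑ k, algebraMap ℂ H (if d k j = c then (1:ℂ) else 0) * (v i k * v m j) := by
        refine Finset.sum_congr rfl fun m _ => Finset.sum_congr rfl fun k _ => ?_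
        by_cases h : d i m = d k j
        · rw [h]
        · rw [vanish i j k m h, mul_zero, mul_zero]
    _ = ∑ k, algebraMap ℂ H (if d k j = c then (1:ℂ) else 0) * v i k := by
        rw [Finset.sum_comm]
        refine Finset.sum_congr rfl fun k _ => ?_
        rw [← Finset.mul_sum, ← Finset.mul_sum, hcol j, mul_one]
    _ = ∑ m, v i m * algebraMap ℂ H (if d m j = c then (1:ℂ) else 0) := by
        refine Finset.sum_congr rfl fun k _ => ?_
        exact (Algebra.commutes _ _)
end

section
/- Let H be a unital C*-algebra, X a finite set, and v ∈ M_X(H) a magic biunitary. Let K be a linear subspace of X → ℂ and let P ∈ M_X(ℂ) be the matrix of the orthogonal projection of X → ℂ onto K with respect to the standard inner product. Then P commutes with v if and only if for every f ∈ K the vector (j ↦ Σ_i f i • v j i) in X → H belongs to the H-submodule of X → H generated by the vectors (j ↦ (g j) • 1_H) with g ∈ K. -/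
open Matrix Finset

/-- In a C*-algebra, if a finite sum of elements of the form `a * a⋆` is zero,
then each term's `a` is zero. -/
lemma sum_mul_star_eq_zero_aux {H : Type*} [CStarAlgebra H] {ι : Type*} (s : Finset ι)
    (a : ι → H) (h : ∑ i ∈ s, a i * star (a i) = 0) : ∀ i ∈ s, a i = 0 := by
  letI := CStarAlgebra.spectralOrder H
  haveI := CStarAlgebra.spectralOrderedRing H
  intro i hi
  have h0 : ∀ j ∈ s, (0 : H) ≤ a j * star (a j) := fun j _ => mul_star_self_nonneg (a j)
  have hz := (Finset.sum_eq_zero_iff_of_nonneg h0).mp h i hi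
  exact (CStarRing.mul_star_self_eq_zero_iff _).mp hz

/-- A finite family of projections in a C*-algebra summing to `1` is pairwise orthogonal. -/
lemma orth_of_sum_one_aux {H : Type*} [CStarAlgebra H] {X : Type*} [Fintype X] [DecidableEq X]
    (f : X → H) (hsa : ∀ j, star (f j) = f j) (hid : ∀ j, f j * f j = f j)
    (hsum : ∑ j, f j = 1) {k l : X} (hkl : l ≠ k) : f k * f l = 0 := by
  have hterm : ∀ j, (f k * f j) * star (f k * f j) = f k * f j * f k := by
    intro j
    rw [StarMul.star_mul, hsa, hsa, ← mul_assoc, mul_assoc (f k) (f j) (f j), hid]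
  have key : ∑ j, f k * f j * f k = f k := by
    simp_rw [mul_assoc, ← Finset.mul_sum, ← Finset.sum_mul, hsum, one_mul, hid]
  have hrest : ∑ j ∈ Finset.univ.erase k, (f k * f j) * star (f k * f j) = 0 := by
    simp_rw [hterm]
    rw [Finset.sum_erase_eq_sub (Finset.mem_univ k), key, hid, hid, sub_self]
  have := sum_mul_star_eq_zero_aux _ _ hrest l (Finset.mem_erase.mpr ⟨hkl, Finset.mem_univ l⟩)
  exact this

/-- Let `v ∈ M_X(H)` be a magic biunitary over a unital
C*-algebra, `K` a linear subspace of `X → ℂ`, and `P ∈ M_X(ℂ)` the matrix of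
the orthogonal projection onto `K` (for the standard inner product): `P` is
Hermitian, maps everything into `K` and restricts to the identity on `K`.
Then `P` commutes with `v` iff for every `f ∈ K` the vector
`j ↦ ∑ i, f i • v j i` lies in the `H`-submodule of `X → H` generated by the
vectors `j ↦ (g j) • 1` with `g ∈ K`. -/
theorem projection_commutes_iff_invariant
    (H : Type*) [CStarAlgebra H] (X : Type*) [Fintype X] [DecidableEq X]
    (v : Matrix X X H)
    (hsa : ∀ i j, star (v i j) = v i j)
    (hidem : ∀ i j, v i j * v i j = v i j)
    (hrow : ∀ i, ∑ j, v i j = 1)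
    (hcol : ∀ j, ∑ i, v i j = 1)
    (K : Submodule ℂ (X → ℂ))
    (P : Matrix X X ℂ)
    (hP1 : ∀ f : X → ℂ, P.mulVec f ∈ K)
    (hP2 : ∀ f ∈ K, P.mulVec f = f)
    (hP3 : P.conjTranspose = P) :
    (P.map (algebraMap ℂ H) * v = v * P.map (algebraMap ℂ H)) ↔
      (∀ f ∈ K, (fun j => ∑ i, f i • v j i) ∈
        Submodule.span H {x : X → H | ∃ g ∈ K, x = fun j => (g j) • (1 : H)}) := by
  set Q : Matrix X X H := P.map (algebraMap ℂ H) with hQdef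
  set S : Set (X → H) := {x : X → H | ∃ g ∈ K, x = fun j => (g j) • (1 : H)} with hSdef
  -- the lift of vectors
  set L : (X → ℂ) → (X → H) := fun f i => algebraMap ℂ H (f i) with hLdef
  have hQentry : ∀ i j, Q i j = algebraMap ℂ H (P i j) := fun i j => rfl
  have hQL : ∀ f : X → ℂ, Q *ᵥ L f = L (P *ᵥ f) := by
    intro f
    funext j
    simp only [Matrix.mulVec, dotProduct, hLdef, hQentry]
    rw [map_sum]
    exact Finset.sum_congr rfl fun x _ => (_root_.map_mul (algebraMap ℂ H) _ _).symm
  -- P is idempotent, hence so is Q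
  have hPP : P * P = P := by
    ext i j
    have h1 := congrFun (hP2 _ (hP1 (Pi.single j 1))) i
    rw [Matrix.mulVec_mulVec] at h1
    simpa using h1
  have hQQ : Q * Q = Q := by
    rw [hQdef, ← Matrix.map_mul, hPP]
  -- row and column orthogonality
  have hrowO : ∀ i k l, l ≠ k → v i k * v i l = 0 := fun i k l h =>
    orth_of_sum_one_aux (fun j => v i j) (fun j => hsa i j) (fun j => hidem i j) (hrow i) h
  have hcolO : ∀ k i j, j ≠ i → v i k * v j k = 0 := fun k i j h =>
    orth_of_sum_one_aux (fun m => v m k) (fun m => hsa m k) (fun m => hidem m k) (hcol k) h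
  -- v * vᵀ = 1
  have hvvt : v * vᵀ = 1 := by
    ext i j
    rw [Matrix.mul_apply]
    by_cases h : i = j
    · subst h
      simp only [transpose_apply, Matrix.one_apply_eq]
      calc ∑ k, v i k * v i k = ∑ k, v i k := by simp_rw [hidem]
        _ = 1 := hrow i
    · rw [Matrix.one_apply_ne h]
      apply Finset.sum_eq_zero
      intro k _
      rw [transpose_apply]
      exact hcolO k i j (Ne.symm h)
  -- the fixed submodule of Q
  have hQsmul : ∀ (c : H) (x : X → H), Q *ᵥ (c • x) = c • (Q *ᵥ x) := by
    intro c x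
    funext j
    simp only [Matrix.mulVec, dotProduct, Pi.smul_apply, smul_eq_mul, Finset.mul_sum]
    refine Finset.sum_congr rfl fun i _ => ?_
    rw [hQentry j i, ← mul_assoc, Algebra.commutes (P j i) c, mul_assoc]
  set M : Submodule H (X → H) :=
    { carrier := {x : X → H | Q *ᵥ x = x}
      add_mem' := by
        intro a b ha hb
        simp only [Set.mem_setOf_eq] at *
        rw [Matrix.mulVec_add, ha, hb]
      zero_mem' := by simp [Matrix.mulVec_zero]
      smul_mem' := by
        intro c x hx
        simp only [Set.mem_setOf_eq] at *
        rw [hQsmul, hx] } with hMdef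
  have hSsub : S ⊆ (M : Set (X → H)) := by
    rintro x ⟨g, hg, rfl⟩
    show Q *ᵥ _ = _
    have hx : (fun j => (g j) • (1 : H)) = L g := by
      funext j
      exact (Algebra.algebraMap_eq_smul_one (g j)).symm
    rw [hx, hQL, hP2 g hg]
  have hspan : ∀ x : X → H, Q *ᵥ x = x → x ∈ Submodule.span H S := by
    intro x hx
    have hxe : x = ∑ i, x i • (fun j => (P j i) • (1 : H)) := by
      funext j
      rw [Finset.sum_apply]
      have he : ∀ i, (x i • fun j => (P j i) • (1 : H)) j = algebraMap ℂ H (P j i) * x i := by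
        intro i
        simp only [Pi.smul_apply, smul_eq_mul]
        rw [← Algebra.algebraMap_eq_smul_one, ← Algebra.commutes (P j i) (x i)]
      simp_rw [he]
      have h2 : (Q *ᵥ x) j = ∑ i, algebraMap ℂ H (P j i) * x i := by
        simp only [Matrix.mulVec, dotProduct, hQentry]
      rw [← h2, hx]
    rw [hxe]
    refine Submodule.sum_mem _ fun i _ => Submodule.smul_mem _ _ (Submodule.subset_span ?_)
    refine ⟨fun j => P j i, ?_, rfl⟩
    have : (fun j => P j i) = P *ᵥ Pi.single i 1 := by
      funext j; simp
    rw [this]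
    exact hP1 _
  -- the vector in question
  have hw : ∀ f : X → ℂ, (fun j => ∑ i, f i • v j i) = v *ᵥ L f := by
    intro f
    funext j
    simp only [Matrix.mulVec, dotProduct, hLdef, Algebra.algebraMap_eq_smul_one,
      mul_smul_comm, mul_one]
  constructor
  · -- commutation implies invariance
    intro hcomm f hf
    apply hspan
    rw [hw]
    rw [Matrix.mulVec_mulVec, hcomm, ← Matrix.mulVec_mulVec, hQL, hP2 f hf]
  · -- invariance implies commutation
    intro hinv
    have hfix : ∀ f ∈ K, Q *ᵥ (v *ᵥ L f) = v *ᵥ L f := by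
      intro f hf
      have hm := (Submodule.span_le.mpr hSsub) (hinv f hf)
      rw [hw f] at hm
      exact hm
    have hLe : ∀ j : X, L (Pi.single j (1 : ℂ)) = Pi.single j (1 : H) := by
      intro j
      funext m
      simp [hLdef, Pi.single_apply, apply_ite (algebraMap ℂ H)]
    -- step 1 : Q * v * Q = v * Q
    have e1 : Q * v * Q = v * Q := by
      ext i j
      have key : Q *ᵥ (v *ᵥ (Q *ᵥ Pi.single j (1 : H))) = v *ᵥ (Q *ᵥ Pi.single j (1 : H)) := by
        rw [← hLe, hQL]
        exact hfix _ (hP1 _)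
      rw [Matrix.mulVec_mulVec, Matrix.mulVec_mulVec, Matrix.mulVec_mulVec] at key
      have := congrFun key i
      simpa using this
    -- conjugate transposes
    have hQH : Q.conjTranspose = Q := by
      ext i j
      rw [conjTranspose_apply, hQentry, hQentry, ← algebraMap_star_comm]
      congr 1
      have := congrFun (congrFun hP3 i) j
      rw [conjTranspose_apply] at this
      exact this
    have hvH : v.conjTranspose = vᵀ := by
      ext i j
      rw [conjTranspose_apply, transpose_apply, hsa]
    -- step 2 : Q * vᵀ * Q = Q * vᵀ
    have e2 : Q * vᵀ * Q = Q * vᵀ := by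
      have h1 := congrArg Matrix.conjTranspose e1
      rw [Matrix.conjTranspose_mul, Matrix.conjTranspose_mul, Matrix.conjTranspose_mul,
        hQH, hvH] at h1
      rw [← mul_assoc] at h1
      exact h1
    -- the commutator
    set C : Matrix X X H := Q * v - v * Q with hCdef
    have hCH : C.conjTranspose = vᵀ * Q - Q * vᵀ := by
      rw [hCdef, Matrix.conjTranspose_sub, Matrix.conjTranspose_mul, Matrix.conjTranspose_mul,
        hQH, hvH]
    have hCC : C * C.conjTranspose = Q - v * Q * vᵀ := by
      rw [hCH, hCdef, Matrix.sub_mul, Matrix.mul_sub, Matrix.mul_sub]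
      have t1 : Q * v * (vᵀ * Q) = Q := by
        rw [show Q * v * (vᵀ * Q) = Q * (v * vᵀ) * Q by noncomm_ring, hvvt, mul_one, hQQ]
      have t2 : Q * v * (Q * vᵀ) = v * Q * vᵀ := by
        rw [show Q * v * (Q * vᵀ) = (Q * v * Q) * vᵀ by noncomm_ring, e1]
      have t3 : v * Q * (vᵀ * Q) = v * Q * vᵀ := by
        rw [show v * Q * (vᵀ * Q) = v * (Q * vᵀ * Q) by noncomm_ring, e2, ← mul_assoc]
      have t4 : v * Q * (Q * vᵀ) = v * Q * vᵀ := by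
        rw [show v * Q * (Q * vᵀ) = v * (Q * Q) * vᵀ by noncomm_ring, hQQ]
      rw [t1, t2, t3, t4]
      abel
    -- trace computation
    have hsum2 : ∀ k l, ∑ m, v m k * v m l = if k = l then (1 : H) else 0 := by
      intro k l
      by_cases h : k = l
      · subst h
        rw [if_pos rfl]
        calc ∑ m, v m k * v m k = ∑ m, v m k := by simp_rw [hidem]
          _ = 1 := hcol k
      · rw [if_neg h]
        exact Finset.sum_eq_zero fun m _ => hrowO m k l (Ne.symm h)
    have htr : ∑ m, (v * Q * vᵀ) m m = ∑ m, Q m m := by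
      have expand : ∀ m, (v * Q * vᵀ) m m = ∑ k, ∑ l, Q k l * (v m k * v m l) := by
        intro m
        rw [Matrix.mul_apply]
        simp_rw [Matrix.mul_apply, transpose_apply, Finset.sum_mul]
        rw [Finset.sum_comm]
        refine Finset.sum_congr rfl fun k _ => Finset.sum_congr rfl fun l _ => ?_
        rw [hQentry k l, show v m k * algebraMap ℂ H (P k l) * v m l
            = algebraMap ℂ H (P k l) * (v m k * v m l) by
          rw [← Algebra.commutes (P k l) (v m k), mul_assoc]]
      calc ∑ m, (v * Q * vᵀ) m m = ∑ m, ∑ k, ∑ l, Q k l * (v m k * v m l) := by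
            simp_rw [expand]
        _ = ∑ k, ∑ l, Q k l * (∑ m, v m k * v m l) := by
            rw [Finset.sum_comm]
            refine Finset.sum_congr rfl fun k _ => ?_
            rw [Finset.sum_comm]
            refine Finset.sum_congr rfl fun l _ => ?_
            rw [Finset.mul_sum]
        _ = ∑ k, ∑ l, (if k = l then Q k l else 0) := by
            simp_rw [hsum2, mul_ite, mul_one, mul_zero]
        _ = ∑ m, Q m m := by
            refine Finset.sum_congr rfl fun k _ => ?_
            simp
    -- conclude C = 0
    have hzero : ∑ p : X × X, C p.1 p.2 * star (C p.1 p.2) = 0 := by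
      rw [Fintype.sum_prod_type]
      calc ∑ m, ∑ k, C m k * star (C m k) = ∑ m, (C * C.conjTranspose) m m := by
            refine Finset.sum_congr rfl fun m _ => ?_
            rw [Matrix.mul_apply]
            exact Finset.sum_congr rfl fun k _ => by rw [conjTranspose_apply]
        _ = ∑ m, (Q - v * Q * vᵀ) m m := by rw [hCC]
        _ = 0 := by
            simp only [Matrix.sub_apply, Finset.sum_sub_distrib, htr, sub_self]
    have hC0 : C = 0 := by
      ext m k
      have := sum_mul_star_eq_zero_aux Finset.univ (fun p : X × X => C p.1 p.2) hzero
        (m, k) (Finset.mem_univ _)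
      simpa using this
    rw [hCdef] at hC0
    exact sub_eq_zero.mp hC0
end

section
/- Let H be a unital C*-algebra, X a finite set, v ∈ M_X(H) a magic biunitary, and d ∈ M_X(ℂ) a complex matrix that commutes with v. For any complex number c, let f : X → ℂ be the characteristic function of the set {i ∈ X | d i i = c}. Then f is fixed by the coaction determined by v, i.e. Σ_i f i • v j i = (f j) • 1_H for every j ∈ X. -/
open scoped Classical

/-- If `v ∈ M_X(H)` is a magic biunitary over a unital C*-algebra
and `d ∈ M_X(ℂ)` commutes with `v`, then for any `c ∈ ℂ` the characteristic
function `f` of `{i | d i i = c}` is fixed by the coaction determined by `v`: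
`∑ i, f i • v j i = (f j) • 1` for all `j`. -/
theorem diagonal_level_set_fixed
    (H : Type*) [CStarAlgebra H] (X : Type*) [Fintype X] [DecidableEq X]
    (v : Matrix X X H)
    (hsa : ∀ i j, star (v i j) = v i j)
    (hidem : ∀ i j, v i j * v i j = v i j)
    (hrow : ∀ i, ∑ j, v i j = 1)
    (hcol : ∀ j, ∑ i, v i j = 1)
    (d : Matrix X X ℂ)
    (hd : d.map (algebraMap ℂ H) * v = v * d.map (algebraMap ℂ H))
    (c : ℂ) (f : X → ℂ) (hf : ∀ i, f i = if d i i = c then 1 else 0) :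
    ∀ j, ∑ i, f i • v j i = (f j) • (1 : H) := by
  classical
  letI : PartialOrder H := CStarAlgebra.spectralOrder H
  letI : StarOrderedRing H := CStarAlgebra.spectralOrderedRing H
  -- row orthogonality: distinct projections in a row multiply to zero
  have row_orth : ∀ j k m, k ≠ m → v j k * v j m = 0 := by
    intro j k m hkm
    have h1 : ∑ l, v j m * v j l * v j m = v j m := by
      rw [← Finset.sum_mul, ← Finset.mul_sum, hrow, mul_one, hidem]
    have h2 : ∑ l ∈ Finset.univ.erase m, v j m * v j l * v j m = 0 := by
      have := Finset.add_sum_erase Finset.univ (fun l => v j m * v j l * v j m)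
        (Finset.mem_univ m)
      rw [h1] at this
      simp only [hidem] at this
      exact add_eq_left.mp this
    have hterm : ∀ l ∈ Finset.univ.erase m, (0 : H) ≤ v j m * v j l * v j m := by
      intro l _
      have : v j m * v j l * v j m = star (v j l * v j m) * (v j l * v j m) := by
        simp only [star_mul, hsa]
        conv_rhs => rw [mul_assoc, ← mul_assoc (v j l), hidem, ← mul_assoc]
      rw [this]
      exact star_mul_self_nonneg _
    have hk : v j m * v j k * v j m = 0 :=
      (Finset.sum_eq_zero_iff_of_nonneg hterm).mp h2 k
        (Finset.mem_erase.mpr ⟨hkm, Finset.mem_univ k⟩)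
    have : star (v j k * v j m) * (v j k * v j m) = 0 := by
      simp only [star_mul, hsa]
      conv_lhs => rw [mul_assoc, ← mul_assoc (v j k), hidem, ← mul_assoc]
      exact hk
    exact (CStarRing.star_mul_self_eq_zero_iff _).mp this
  -- column orthogonality
  have col_orth : ∀ i k m, k ≠ m → v k i * v m i = 0 := by
    intro i k m hkm
    have h1 : ∑ l, v m i * v l i * v m i = v m i := by
      rw [← Finset.sum_mul, ← Finset.mul_sum, hcol, mul_one, hidem]
    have h2 : ∑ l ∈ Finset.univ.erase m, v m i * v l i * v m i = 0 := by
      have := Finset.add_sum_erase Finset.univ (fun l => v m i * v l i * v m i)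
        (Finset.mem_univ m)
      rw [h1] at this
      simp only [hidem] at this
      exact add_eq_left.mp this
    have hterm : ∀ l ∈ Finset.univ.erase m, (0 : H) ≤ v m i * v l i * v m i := by
      intro l _
      have : v m i * v l i * v m i = star (v l i * v m i) * (v l i * v m i) := by
        simp only [star_mul, hsa]
        conv_rhs => rw [mul_assoc, ← mul_assoc (v l i), hidem, ← mul_assoc]
      rw [this]
      exact star_mul_self_nonneg _
    have hk : v m i * v k i * v m i = 0 :=
      (Finset.sum_eq_zero_iff_of_nonneg hterm).mp h2 k
        (Finset.mem_erase.mpr ⟨hkm, Finset.mem_univ k⟩)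
    have : star (v k i * v m i) * (v k i * v m i) = 0 := by
      simp only [star_mul, hsa]
      conv_lhs => rw [mul_assoc, ← mul_assoc (v k i), hidem, ← mul_assoc]
      exact hk
    exact (CStarRing.star_mul_self_eq_zero_iff _).mp this
  -- key: the diagonal of d "commutes" with v entrywise
  have key : ∀ j i, d j j • v j i = d i i • v j i := by
    intro j i
    have hent : ∑ k, d j k • v k i = ∑ k, d k i • v j k := by
      have := congrArg (fun M : Matrix X X H => M j i) hd
      simpa [Matrix.mul_apply, Matrix.map_apply, Algebra.smul_def,
        (Algebra.commutes _ _).symm] using this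
    have hmul := congrArg (fun x : H => v j i * x * v j i) hent
    simp only [Finset.mul_sum, Finset.sum_mul, mul_smul_comm, smul_mul_assoc] at hmul
    have hL : ∑ k, d j k • (v j i * v k i * v j i) = d j j • v j i := by
      rw [Finset.sum_eq_single j]
      · rw [hidem, hidem]
      · intro k _ hk
        rw [col_orth i j k (fun h => hk h.symm), zero_mul, smul_zero]
      · exact fun h => absurd (Finset.mem_univ j) h
    have hR : ∑ k, d k i • (v j i * v j k * v j i) = d i i • v j i := by
      rw [Finset.sum_eq_single i]
      · rw [hidem, hidem]
      · intro k _ hk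
        rw [row_orth j i k (fun h => hk h.symm), zero_mul, smul_zero]
      · exact fun h => absurd (Finset.mem_univ i) h
    rw [hL, hR] at hmul
    exact hmul
  -- if diagonal entries differ, the corresponding entry of v vanishes
  have vanish : ∀ j i, d j j ≠ d i i → v j i = 0 := by
    intro j i hne
    have : (d j j - d i i) • v j i = 0 := by
      rw [sub_smul, key j i, sub_self]
    rcases smul_eq_zero.mp this with h | h
    · exact absurd (sub_eq_zero.mp h) hne
    · exact h
  intro j
  have : ∀ i, f i • v j i = f j • v j i := by
    intro i
    by_cases hi : d i i = c <;> by_cases hj : d j j = c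
    · rw [hf i, hf j, if_pos hi, if_pos hj]
    · rw [vanish j i (by rw [hi]; exact hj), smul_zero, smul_zero]
    · rw [vanish j i (by rw [hj]; exact fun h => hi h.symm), smul_zero, smul_zero]
    · rw [hf i, hf j, if_neg hi, if_neg hj]
  calc ∑ i, f i • v j i = ∑ i, f j • v j i := Finset.sum_congr rfl (fun i _ => this i)
    _ = f j • ∑ i, v j i := (Finset.smul_sum).symm
    _ = f j • 1 := by rw [hrow]
end

section
/- Let X be a finite simple graph on vertex set V with adjacency matrix A ∈ M_V(ℂ). Let H be a unital C*-algebra and v ∈ M_V(H) a magic biunitary commuting with A, and assume v is homogeneous, meaning that every f : V → ℂ satisfying Σ_i f i • v j i = (f j) • 1_H for all j ∈ V is a constant function. Then for every natural number l ≥ 2, the number of closed walks of length l based at a vertex is independent of the vertex: (A^l) p p = (A^l) q q for all p, q ∈ V. -/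
/-- Self-adjoint idempotents summing to `1` in a C*-algebra are mutually
orthogonal. -/
lemma ortho_of_sum_one {H : Type*} [CStarAlgebra H] {ι : Type*} [Fintype ι]
    [DecidableEq ι]
    (e : ι → H) (hsa : ∀ i, star (e i) = e i) (hid : ∀ i, e i * e i = e i)
    (hsum : ∑ i, e i = 1) : ∀ i j, i ≠ j → e i * e j = 0 := by
  letI := CStarAlgebra.spectralOrder H
  letI := CStarAlgebra.spectralOrderedRing H
  intro i j hij
  have hkey : ∀ k, e j * e k * e j = star (e k * e j) * (e k * e j) := by
    intro k
    rw [star_mul, hsa, hsa]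
    conv_rhs => rw [mul_assoc, ← mul_assoc (e k) (e k), hid k, ← mul_assoc]
  have hS : ∑ k, e j * e k * e j = e j := by
    simp_rw [mul_assoc]
    rw [← Finset.mul_sum, ← Finset.sum_mul, hsum, one_mul, hid]
  have herase : ∑ k ∈ Finset.univ.erase j, e j * e k * e j = 0 := by
    have h := Finset.add_sum_erase Finset.univ (fun k => e j * e k * e j)
      (Finset.mem_univ j)
    simp only [hid j] at h
    rw [hS] at h
    exact (add_eq_left).mp h
  have hzero : e j * e i * e j = 0 := by
    refine (Finset.sum_eq_zero_iff_of_nonneg ?_).mp herase i ?_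
    · intro k _
      rw [hkey k]
      exact star_mul_self_nonneg _
    · exact Finset.mem_erase.mpr ⟨hij, Finset.mem_univ i⟩
  have : star (e i * e j) * (e i * e j) = 0 := by
    rw [star_mul, hsa, hsa, mul_assoc, ← mul_assoc (e i) (e i), hid i, ← mul_assoc,
      hzero]
  exact (CStarRing.star_mul_self_eq_zero_iff _).mp this

/-- If a magic biunitary `v ∈ M_V(H)` over a unital C*-algebra
commutes with the adjacency matrix `A` of a finite simple graph and `v` is
homogeneous, then for every `l ≥ 2` the number `(A^l) p p` of closed walks of
length `l` based at a vertex is independent of the vertex. -/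
theorem homogeneous_loop_count_independent
    (V : Type*) [Fintype V] [DecidableEq V]
    (G : SimpleGraph V) [DecidableRel G.Adj]
    (H : Type*) [CStarAlgebra H]
    (v : Matrix V V H)
    (hsa : ∀ i j, star (v i j) = v i j)
    (hidem : ∀ i j, v i j * v i j = v i j)
    (hrow : ∀ i, ∑ j, v i j = 1)
    (hcol : ∀ j, ∑ i, v i j = 1)
    (hd : (G.adjMatrix ℂ).map (algebraMap ℂ H) * v =
      v * (G.adjMatrix ℂ).map (algebraMap ℂ H))
    (hhom : ∀ f : V → ℂ, (∀ j, ∑ i, f i • v j i = (f j) • (1 : H)) →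
      ∀ i j, f i = f j) :
    ∀ l : ℕ, 2 ≤ l → ∀ p q : V, (G.adjMatrix ℂ ^ l) p p = (G.adjMatrix ℂ ^ l) q q := by
  intro l _ p q
  set A := G.adjMatrix ℂ with hA
  set B := A ^ l with hB
  -- v commutes with powers of A (mapped into H)
  have hcomm : B.map (algebraMap ℂ H) * v = v * B.map (algebraMap ℂ H) := by
    have hc : Commute ((A.map (algebraMap ℂ H))) v := hd
    have := hc.pow_left l
    have hmp : (A.map (algebraMap ℂ H)) ^ l = B.map (algebraMap ℂ H) := by
      have := map_pow ((algebraMap ℂ H).mapMatrix) A l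
      simpa [RingHom.mapMatrix_apply] using this.symm
    rwa [hmp] at this
  -- column and row orthogonality
  have colz : ∀ i j k, j ≠ k → v j i * v k i = 0 := fun i j k h =>
    ortho_of_sum_one (fun m => v m i) (fun m => hsa m i) (fun m => hidem m i)
      (hcol i) j k h
  have rowz : ∀ i j k, j ≠ k → v i j * v i k = 0 := fun i j k h =>
    ortho_of_sum_one (fun m => v i m) (fun m => hsa i m) (fun m => hidem i m)
      (hrow i) j k h
  have key : ∀ i j, B j j • v j i = B i i • v j i := by
    intro i j
    have h1 : ∑ k, B j k • v k i = ∑ k, B k i • v j k := by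
      have h := congrFun (congrFun hcomm j) i
      simp only [Matrix.mul_apply, Matrix.map_apply] at h
      calc ∑ k, B j k • v k i = ∑ k, algebraMap ℂ H (B j k) * v k i := by
            simp_rw [Algebra.smul_def]
        _ = ∑ k, v j k * algebraMap ℂ H (B k i) := h
        _ = ∑ k, B k i • v j k := by
            simp_rw [← Algebra.commutes, ← Algebra.smul_def]
    have h2 : ∑ k, B j k • (v j i * v k i) = ∑ k, B k i • (v j i * v j k) := by
      have := congrArg (fun x => v j i * x) h1
      simpa only [Finset.mul_sum, mul_smul_comm] using this
    have hL : ∑ k, B j k • (v j i * v k i) = B j j • v j i := by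
      rw [Finset.sum_eq_single j]
      · rw [hidem]
      · intro k _ hk
        rw [colz i j k (Ne.symm hk), smul_zero]
      · intro h; exact absurd (Finset.mem_univ j) h
    have hR : ∑ k, B k i • (v j i * v j k) = B i i • v j i := by
      rw [Finset.sum_eq_single i]
      · rw [hidem]
      · intro k _ hk
        rw [rowz j i k (Ne.symm hk), smul_zero]
      · intro h; exact absurd (Finset.mem_univ i) h
    rw [← hL, h2, hR]
  have hf : ∀ j, ∑ i, (fun i => B i i) i • v j i = (fun i => B i i) j • (1 : H) := by
    intro j
    calc ∑ i, B i i • v j i = ∑ i, B j j • v j i :=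
          Finset.sum_congr rfl (fun i _ => (key i j).symm)
      _ = B j j • ∑ i, v j i := (Finset.smul_sum).symm
      _ = B j j • (1 : H) := by rw [hrow]
  exact hhom (fun i => B i i) hf p q
end

section
/- Let n ≥ 1 and let r ∈ M_{ZMod n}(ℂ) be the incidency matrix of the oriented n-gon: r i j = 1 if j = i + 1 and r i j = 0 otherwise. Let H be a unital C*-algebra and v ∈ M_{ZMod n}(H) a magic biunitary commuting with r. Then v is circulant, i.e. v (i + k) (j + k) = v i j for all i, j, k ∈ ZMod n, and any two entries of v commute with each other (so the *-subalgebra of H generated by the entries of v is commutative). -/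
/-- Let `r` be the incidency matrix of the oriented `n`-gon on
`ZMod n` (`r i j = 1` iff `j = i + 1`). Any magic biunitary `v ∈ M_{ZMod n}(H)`
over a unital C*-algebra commuting with `r` is circulant, and its entries
commute with each other. -/
theorem oriented_ngon_magic_biunitary_commutative
    (n : ℕ) [NeZero n]
    (H : Type*) [CStarAlgebra H]
    (r : Matrix (ZMod n) (ZMod n) ℂ)
    (hr : ∀ i j, r i j = if j = i + 1 then 1 else 0)
    (v : Matrix (ZMod n) (ZMod n) H)
    (hsa : ∀ i j, star (v i j) = v i j)
    (hidem : ∀ i j, v i j * v i j = v i j)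
    (hrow : ∀ i, ∑ j, v i j = 1)
    (hcol : ∀ j, ∑ i, v i j = 1)
    (hcomm : r.map (algebraMap ℂ H) * v = v * r.map (algebraMap ℂ H)) :
    (∀ i j k : ZMod n, v (i + k) (j + k) = v i j) ∧
    (∀ i j k l : ZMod n, v i j * v k l = v k l * v i j) := by
  -- Step 1: one-step shift invariance
  have hshift : ∀ i j : ZMod n, v (i + 1) (j + 1) = v i j := by
    intro i j
    have h1 := congrFun (congrFun hcomm i) (j + 1)
    simp only [Matrix.mul_apply, Matrix.map_apply, hr, apply_ite (algebraMap ℂ H),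
      map_one, map_zero, ite_mul, mul_ite, one_mul, zero_mul, mul_one, mul_zero,
      add_left_inj, Finset.sum_ite_eq, Finset.sum_ite_eq', Finset.mem_univ, if_true] at h1
    exact h1
  -- Step 2: shift by any natural number
  have hnat : ∀ (m : ℕ) (i j : ZMod n), v (i + (m : ZMod n)) (j + (m : ZMod n)) = v i j := by
    intro m
    induction m with
    | zero => simp
    | succ m ih =>
      intro i j
      have hc : ((m + 1 : ℕ) : ZMod n) = (m : ZMod n) + 1 := by push_cast; ring
      rw [hc, ← add_assoc, ← add_assoc, hshift, ih]
  have circ : ∀ i j k : ZMod n, v (i + k) (j + k) = v i j := by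
    intro i j k
    have : ((k.val : ℕ) : ZMod n) = k := ZMod.natCast_rightInverse k
    rw [← this]
    exact hnat k.val i j
  refine ⟨circ, ?_⟩
  letI : PartialOrder H := CStarAlgebra.spectralOrder H
  letI : StarOrderedRing H := CStarAlgebra.spectralOrderedRing H
  -- positivity of entries
  have hpos : ∀ i j, 0 ≤ v i j := by
    intro i j
    have := star_mul_self_nonneg (v i j)
    rwa [hsa, hidem] at this
  -- orthogonality: two projections `p, q` with `p ≤ 1 - q` satisfy `p * q = 0`
  have key : ∀ p q : H, star p = p → star q = q → p * p = p → q * q = q →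
      p ≤ 1 - q → p * q = 0 := by
    intro p q hp hq hpp hqq hle
    have hconj : star q * p * q ≤ star q * (1 - q) * q := star_left_conjugate_le_conjugate hle q
    rw [hq] at hconj
    have hzero : q * (1 - q) * q = 0 := by
      rw [mul_sub, mul_one, hqq, sub_self, zero_mul]
    rw [hzero] at hconj
    have hge : 0 ≤ q * p * q := by
      have := star_mul_self_nonneg (p * q)
      rwa [star_mul, hp, hq, ← mul_assoc, mul_assoc q p p, hpp] at this
    have hqpq : q * p * q = 0 := le_antisymm hconj hge
    have hz : star (p * q) * (p * q) = 0 := by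
      rw [star_mul, hp, hq, mul_assoc, ← mul_assoc p p q, hpp, ← mul_assoc, hqpq]
    exact CStarRing.star_mul_self_eq_zero_iff (p * q) |>.mp hz
  have horth : ∀ (i j l : ZMod n), j ≠ l → v i j * v i l = 0 := by
    intro i j l hjl
    have hsub : ({j, l} : Finset (ZMod n)) ⊆ Finset.univ := Finset.subset_univ _
    have hsum : ∑ m ∈ (Finset.univ \ {j, l}), v i m + (v i j + v i l) = 1 := by
      rw [← Finset.sum_pair hjl, Finset.sum_sdiff hsub, hrow]
    have hrest : 0 ≤ ∑ m ∈ (Finset.univ \ {j, l}), v i m :=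
      Finset.sum_nonneg fun m _ => hpos i m
    have h1 : v i j + v i l ≤ 1 := by
      calc v i j + v i l ≤ ∑ m ∈ (Finset.univ \ {j, l}), v i m + (v i j + v i l) :=
            le_add_of_nonneg_left hrest
        _ = 1 := hsum
    exact key (v i j) (v i l) (hsa i j) (hsa i l) (hidem i j) (hidem i l)
      (le_sub_iff_add_le.mpr h1)
  -- commutation
  intro i j k l
  have hik : v i j = v 0 (j - i) := by
    have := circ 0 (j - i) i
    simp only [zero_add, sub_add_cancel] at this
    exact this
  have hkl : v k l = v 0 (l - k) := by
    have := circ 0 (l - k) k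
    simp only [zero_add, sub_add_cancel] at this
    exact this
  rw [hik, hkl]
  by_cases h : j - i = l - k
  · rw [h]
  · rw [horth 0 _ _ h, horth 0 _ _ (Ne.symm h)]
end

section
/- Let n ≥ 1 and k ≥ 1, and set ε = 1 if n is odd and ε = 2 if n is even. Let G be the subgroup of the permutation group of ZMod n generated by the translation x ↦ x + 1 and the negation x ↦ −x (the dihedral group D_n acting on the vertices of the n-gon). Then the number of orbits of G acting diagonally on (ZMod n)^k equals (ε^{k−1} + n^{k−1})/2. -/
open Equiv MulAction DihedralGroup

def phi (n : ℕ) : DihedralGroup n →* Equiv.Perm (ZMod n) where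
  toFun g := match g with
    | .r i => Equiv.addRight i
    | .sr i => (Equiv.addRight i).trans (Equiv.neg _)
  map_one' := by
    show Equiv.addRight (0 : ZMod n) = 1
    ext x; simp
  map_mul' := by
    rintro (i|i) (j|j) <;> ext x <;>
      simp [DihedralGroup.r_mul_r, DihedralGroup.r_mul_sr, DihedralGroup.sr_mul_r,
        DihedralGroup.sr_mul_sr, Equiv.Perm.mul_apply] <;> ring

theorem phi_range (n : ℕ) [NeZero n] :
    (phi n).range = Subgroup.closure {Equiv.addRight (1 : ZMod n), Equiv.neg (ZMod n)} := by
  have htop : (⊤ : Subgroup (DihedralGroup n)) =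
      Subgroup.closure {DihedralGroup.r 1, DihedralGroup.sr 0} := by
    refine le_antisymm ?_ le_top
    rintro (i|i) -
    · have : (DihedralGroup.r i : DihedralGroup n) = (DihedralGroup.r 1) ^ (i.val) := by
        rw [DihedralGroup.r_one_pow]
        congr 1
        simp [ZMod.natCast_val, ZMod.cast_id]
      rw [this]
      exact pow_mem (Subgroup.subset_closure (Set.mem_insert _ _)) _
    · have : (DihedralGroup.sr i : DihedralGroup n) = DihedralGroup.sr 0 * DihedralGroup.r i := by
        simp [DihedralGroup.sr_mul_r]
      rw [this]
      refine mul_mem (Subgroup.subset_closure (by simp)) ?_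
      have : (DihedralGroup.r i : DihedralGroup n) = (DihedralGroup.r 1) ^ (i.val) := by
        rw [DihedralGroup.r_one_pow]; congr 1; simp [ZMod.natCast_val, ZMod.cast_id]
      rw [this]
      exact pow_mem (Subgroup.subset_closure (Set.mem_insert _ _)) _
  rw [MonoidHom.range_eq_map, htop, MonoidHom.map_closure]
  congr 1
  have h1 : phi n (DihedralGroup.r 1) = Equiv.addRight (1 : ZMod n) := rfl
  have h2 : phi n (DihedralGroup.sr 0) = Equiv.neg (ZMod n) := by
    ext x; show -(x + 0) = -x; simp
  rw [Set.image_pair, h1, h2]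

lemma card_ker_double (n : ℕ) [NeZero n] :
    Fintype.card {x : ZMod n // x + x = 0} = if Odd n then 1 else 2 := by
  split_ifs with h
  · -- n odd: 2 is a unit
    rw [Fintype.card_eq_one_iff]
    refine ⟨⟨0, by simp⟩, ?_⟩
    rintro ⟨x, hx⟩
    have h2 : IsUnit (2 : ZMod n) := by
      have := (ZMod.isUnit_iff_coprime 2 n).mpr (Nat.coprime_two_left.mpr h)
      simpa using this
    have : (2 : ZMod n) * x = 0 := by rw [two_mul]; exact hx
    have hx0 : x = 0 := (IsUnit.mul_right_eq_zero h2).mp this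
    simp [hx0]
  · -- n even
    obtain ⟨m, hm'⟩ := Nat.not_odd_iff_even.mp h
    have hm : n = 2 * m := by omega
    have hm0 : m ≠ 0 := by rintro rfl; exact (NeZero.ne n) (by omega)
    have hmn : ((m : ZMod n)) ≠ 0 := by
      rw [Ne, ZMod.natCast_eq_zero_iff]
      intro hd
      exact absurd (Nat.le_of_dvd (Nat.pos_of_ne_zero hm0) hd) (by omega)
    have key : ∀ x : ZMod n, x + x = 0 ↔ (x = 0 ∨ x = (m : ZMod n)) := by
      intro x
      constructor
      · intro hx
        have hv : x = ((x.val : ℕ) : ZMod n) := by simp [ZMod.natCast_val, ZMod.cast_id]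
        have hlt : x.val < n := ZMod.val_lt x
        have : ((x.val + x.val : ℕ) : ZMod n) = 0 := by push_cast; rw [← hv]; exact hx
        rw [ZMod.natCast_eq_zero_iff] at this
        obtain ⟨c, hc⟩ := this
        have hc' : x.val + x.val = 2 * (m * c) := by rw [hc, hm]; ring
        have hc'' : x.val = m * c := by omega
        have hclt : c < 2 := by
          refine lt_of_mul_lt_mul_left ?_ (Nat.zero_le m)
          calc m * c = x.val := hc''.symm
            _ < n := hlt
            _ = m * 2 := by omega
        have hc : x.val = m * c := hc''
        interval_cases c
        · left; rw [hv]; simp [hc]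
        · right; rw [hv, hc]; simp
      · rintro (rfl | rfl)
        · simp
        · have : ((m : ZMod n)) + m = ((2 * m : ℕ) : ZMod n) := by push_cast; ring
          rw [this, ← hm, ZMod.natCast_self]
    calc Fintype.card {x : ZMod n // x + x = 0}
        = Fintype.card {x : ZMod n // x = 0 ∨ x = (m : ZMod n)} :=
          Fintype.card_congr (Equiv.subtypeEquivRight key)
      _ = 2 := by
          rw [Fintype.card_subtype]
          rw [show (Finset.univ.filter fun x : ZMod n => x = 0 ∨ x = (m : ZMod n)) =
            {0, (m : ZMod n)} by ext x; simp [or_comm]]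
          rw [Finset.card_insert_of_notMem (by simpa using hmn.symm), Finset.card_singleton]

lemma card_fiber_double (n : ℕ) [NeZero n] (c : ZMod n) :
    Fintype.card {x : ZMod n // x + x = c} = 0 ∨
    Fintype.card {x : ZMod n // x + x = c} = Fintype.card {x : ZMod n // x + x = 0} := by
  by_cases hc : ∃ x : ZMod n, x + x = c
  · obtain ⟨x₀, hx₀⟩ := hc
    right
    refine Fintype.card_congr ((Equiv.subRight x₀).subtypeEquiv fun x => ?_)
    simp only [Equiv.subRight_apply]
    constructor
    · intro hx; linear_combination hx - hx₀
    · intro hx; linear_combination hx + hx₀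
  · left
    rw [Fintype.card_eq_zero_iff]
    exact ⟨fun ⟨x, hx⟩ => hc ⟨x, hx⟩⟩

lemma sum_card_fiber_double (n : ℕ) [NeZero n] :
    ∑ c : ZMod n, Fintype.card {x : ZMod n // x + x = c} = n := by
  have := Fintype.card_congr (Equiv.sigmaFiberEquiv (fun x : ZMod n => x + x))
  rw [Fintype.card_sigma] at this
  rw [this, ZMod.card]

instance dihAction (n k : ℕ) : MulAction (DihedralGroup n) (Fin k → ZMod n) :=
  MulAction.compHom _ (phi n)

lemma dih_smul_apply {n k : ℕ} (d : DihedralGroup n) (v : Fin k → ZMod n) (j : Fin k) :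
    (d • v) j = phi n d (v j) := rfl

def dihSumEquiv (n : ℕ) : ZMod n ⊕ ZMod n ≃ DihedralGroup n where
  toFun := Sum.elim DihedralGroup.r DihedralGroup.sr
  invFun d := match d with
    | .r i => Sum.inl i
    | .sr i => Sum.inr i
  left_inv := by rintro (i|i) <;> rfl
  right_inv := by rintro (i|i) <;> rfl

lemma card_fixedBy_r {n k : ℕ} [NeZero n] (hk : 1 ≤ k) (i : ZMod n) :
    Fintype.card (MulAction.fixedBy (Fin k → ZMod n) (DihedralGroup.r i)) =
      if i = 0 then n ^ k else 0 := by
  split_ifs with h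
  · subst h
    have : MulAction.fixedBy (Fin k → ZMod n) (DihedralGroup.r (0 : ZMod n)) = Set.univ := by
      ext v
      simp only [MulAction.mem_fixedBy, Set.mem_univ, iff_true]
      funext j
      show (phi n (DihedralGroup.r 0)) (v j) = v j
      show v j + 0 = v j
      simp
    rw [Fintype.card_congr ((Equiv.setCongr this).trans (Equiv.Set.univ _))]
    simp [ZMod.card]
  · rw [Fintype.card_eq_zero_iff]
    constructor
    rintro ⟨v, hv⟩
    have := congrFun hv ⟨0, hk⟩
    rw [dih_smul_apply] at this
    have h2 : v ⟨0, hk⟩ + i = v ⟨0, hk⟩ := this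
    exact h (by linear_combination h2)

lemma card_fixedBy_sr {n k : ℕ} [NeZero n] (i : ZMod n) :
    Fintype.card (MulAction.fixedBy (Fin k → ZMod n) (DihedralGroup.sr i)) =
      (Fintype.card {x : ZMod n // x + x = -i}) ^ k := by
  have e1 : MulAction.fixedBy (Fin k → ZMod n) (DihedralGroup.sr i) ≃
      {v : Fin k → ZMod n // ∀ j, v j + v j = -i} := by
    refine Equiv.subtypeEquivRight fun v => ?_
    constructor
    · intro hv j
      have := congrFun hv j
      rw [dih_smul_apply] at this
      show v j + v j = -i
      have h2 : -(v j + i) = v j := this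
      linear_combination -h2
    · intro hv
      funext j
      rw [dih_smul_apply]
      show -(v j + i) = v j
      linear_combination -(hv j)
  rw [Fintype.card_congr (e1.trans (Equiv.subtypePiEquivPi (p := fun _ x => x + x = -i)))]
  simp [Fintype.card_fun]

lemma dih_total_sum (n k : ℕ) [NeZero n] (hk : 1 ≤ k) :
    ∑ d : DihedralGroup n, Fintype.card (MulAction.fixedBy (Fin k → ZMod n) d) =
      n ^ k + n * (if Odd n then 1 else 2) ^ (k - 1) := by
  obtain ⟨k', rfl⟩ : ∃ k', k = k' + 1 := ⟨k - 1, by omega⟩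
  rw [← Fintype.sum_equiv (dihSumEquiv n)
    (fun s => Fintype.card (MulAction.fixedBy (Fin (k' + 1) → ZMod n) (dihSumEquiv n s)))
    (fun d => Fintype.card (MulAction.fixedBy (Fin (k' + 1) → ZMod n) d)) (fun s => rfl)]
  rw [Fintype.sum_sum_type]
  have hrot : ∑ i : ZMod n,
      Fintype.card (MulAction.fixedBy (Fin (k' + 1) → ZMod n) (dihSumEquiv n (Sum.inl i)))
      = n ^ (k' + 1) := by
    have : ∀ i : ZMod n, Fintype.card
        (MulAction.fixedBy (Fin (k' + 1) → ZMod n) (dihSumEquiv n (Sum.inl i)))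
        = if i = 0 then n ^ (k' + 1) else 0 := fun i => card_fixedBy_r (by omega) i
    simp only [this]
    simp
  have hder : ∀ c : ZMod n, Fintype.card {x : ZMod n // x + x = c} ^ (k' + 1) =
      Fintype.card {x : ZMod n // x + x = c} * (if Odd n then 1 else 2) ^ k' := by
    intro c
    rcases card_fiber_double n c with h | h
    · rw [h]; simp
    · rw [h, card_ker_double]; ring
  have hrefl : ∑ i : ZMod n,
      Fintype.card (MulAction.fixedBy (Fin (k' + 1) → ZMod n) (dihSumEquiv n (Sum.inr i)))
      = n * (if Odd n then 1 else 2) ^ k' := by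
    have h1 : ∀ i : ZMod n, Fintype.card
        (MulAction.fixedBy (Fin (k' + 1) → ZMod n) (dihSumEquiv n (Sum.inr i)))
        = Fintype.card {x : ZMod n // x + x = -i} ^ (k' + 1) := fun i => card_fixedBy_sr i
    simp only [h1]
    rw [Fintype.sum_equiv (Equiv.neg (ZMod n))
      (fun i => Fintype.card {x : ZMod n // x + x = -i} ^ (k' + 1))
      (fun c => Fintype.card {x : ZMod n // x + x = c} ^ (k' + 1)) (fun i => rfl)]
    simp only [hder]
    rw [← Finset.sum_mul, sum_card_fiber_double]
  rw [hrot, hrefl]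
  simp

/-- Let `G ≤ Perm (ZMod n)` be the dihedral group generated by
the translation `x ↦ x + 1` and the negation `x ↦ -x`, acting diagonally on
`(ZMod n)^k` with `k ≥ 1`. With `ε = 1` for `n` odd and `ε = 2` for `n` even,
the number of orbits equals `(ε^(k-1) + n^(k-1))/2`. -/
theorem orbit_count_dihedral_diagonal
    (n : ℕ) [NeZero n] (k : ℕ) (hk : 1 ≤ k)
    (ε : ℕ) (hε : ε = if Odd n then 1 else 2)
    (G : Subgroup (Equiv.Perm (ZMod n)))
    (hG : G = Subgroup.closure {Equiv.addRight (1 : ZMod n), Equiv.neg (ZMod n)}) :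
    2 * Nat.card (Quotient (MulAction.orbitRel G (Fin k → ZMod n))) =
      ε ^ (k - 1) + n ^ (k - 1) := by
  have hGr : G = (phi n).range := by rw [hG, phi_range]
  -- the two orbit relations coincide
  have hrel : ∀ x y : Fin k → ZMod n,
      (MulAction.orbitRel G (Fin k → ZMod n)) x y ↔
      (MulAction.orbitRel (DihedralGroup n) (Fin k → ZMod n)) x y := by
    intro x y
    rw [MulAction.orbitRel_apply, MulAction.orbitRel_apply,
      MulAction.mem_orbit_iff, MulAction.mem_orbit_iff]
    constructor
    · rintro ⟨g, hg⟩
      have hmem : (↑g : Equiv.Perm (ZMod n)) ∈ (phi n).range := by rw [← hGr]; exact g.2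
      obtain ⟨d, hd⟩ := hmem
      refine ⟨d, ?_⟩
      have : (d • y : Fin k → ZMod n) = (phi n d) • y := rfl
      rw [this, hd]
      exact hg
    · rintro ⟨d, hd⟩
      refine ⟨⟨phi n d, by rw [hGr]; exact ⟨d, rfl⟩⟩, ?_⟩
      exact hd
  have hquot : Nat.card (Quotient (MulAction.orbitRel G (Fin k → ZMod n))) =
      Nat.card (Quotient (MulAction.orbitRel (DihedralGroup n) (Fin k → ZMod n))) :=
    Nat.card_congr (Quotient.congrRight hrel)
  rw [hquot]
  -- Burnside
  haveI : Fintype (Quotient (MulAction.orbitRel (DihedralGroup n) (Fin k → ZMod n))) :=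
    Fintype.ofFinite _
  have hb := MulAction.sum_card_fixedBy_eq_card_orbits_mul_card_group
    (DihedralGroup n) (Fin k → ZMod n)
  rw [dih_total_sum n k hk, DihedralGroup.card] at hb
  rw [Nat.card_eq_fintype_card]
  set Q := Fintype.card (Quotient (MulAction.orbitRel (DihedralGroup n) (Fin k → ZMod n)))
  have hn : 0 < n := Nat.pos_of_ne_zero (NeZero.ne n)
  have hnk : n ^ k = n * n ^ (k - 1) := by
    conv_lhs => rw [show k = 1 + (k - 1) by omega]
    rw [pow_add, pow_one]
  rw [hε]
  refine Nat.eq_of_mul_eq_mul_left hn ?_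
  calc n * (2 * Q) = Q * (2 * n) := by ring
    _ = n ^ k + n * (if Odd n then 1 else 2) ^ (k - 1) := hb.symm
    _ = n * ((if Odd n then 1 else 2) ^ (k - 1) + n ^ (k - 1)) := by rw [hnk]; ring
end

section
/- The complement of the circulant graph on ZMod 9 with connection set {1, −1, 2, −2} (the first 9-star) is isomorphic to the circulant graph on ZMod 9 with connection set {1, −1, 3, −3} (the second 9-star). -/
/-- The first 9-star: the circulant graph on `ZMod 9` with connection set
`{1, -1, 2, -2}`. -/
def firstNineStar : SimpleGraph (ZMod 9) :=
  SimpleGraph.fromRel (fun i j => j - i ∈ ({1, -1, 2, -2} : Set (ZMod 9)))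

/-- The second 9-star: the circulant graph on `ZMod 9` with connection set
`{1, -1, 3, -3}`. -/
def secondNineStar : SimpleGraph (ZMod 9) :=
  SimpleGraph.fromRel (fun i j => j - i ∈ ({1, -1, 3, -3} : Set (ZMod 9)))

/-- The complement of the first 9-star is isomorphic to the
second 9-star. -/
theorem first_nine_star_compl_iso_second :
    Nonempty (firstNineStarᶜ ≃g secondNineStar) := by
  refine ⟨⟨⟨fun x => 7 * x, fun x => 4 * x, ?_, ?_⟩, ?_⟩⟩
  · exact (by decide : ∀ x : ZMod 9, 4 * (7 * x) = x)
  · exact (by decide : ∀ x : ZMod 9, 7 * (4 * x) = x)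
  · intro a b
    simp only [firstNineStar, secondNineStar, SimpleGraph.compl_adj,
      SimpleGraph.fromRel_adj, Set.mem_insert_iff, Set.mem_singleton_iff,
      Equiv.coe_fn_mk]
    revert a b; decide
end
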